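/- Let γ_H : ℝ³ → ℝ⁸ be given by γ_H(t₁,t₂,t₃) = (t₁, t₂, t₃, t₁² − t₂², t₂² − t₃², 2t₁t₂, 2t₂t₃, 2t₁t₃), and for f : ℝ⁸ → ℝ define S f(x) = ∫_{[-1,1]³} f(x + γ_H(t)) dt. If p, q ∈ [1,∞] satisfy q > p and (1/p, 1/q) lies outside the closed triangle given by the convex hull of the points (0,0), (1,1), and (8/13, 5/13), then there is no finite constant C such that ‖S f‖_{L^q(ℝ⁸)} ≤ C ‖f‖_{L^p(ℝ⁸)} holds for all nonnegative f ∈ L^p(ℝ⁸). -/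

import Mathlib

open MeasureTheory Set
open scoped ENNReal NNReal

noncomputable def gammaH (t : Fin 3 → ℝ) : Fin 8 → ℝ :=
  ![t 0, t 1, t 2, (t 0) ^ 2 - (t 1) ^ 2, (t 1) ^ 2 - (t 2) ^ 2,
    2 * t 0 * t 1, 2 * t 1 * t 2, 2 * t 0 * t 2]

/-! ### Auxiliary material -/

noncomputable def phiH (t : Fin 3 → ℝ) : Fin 5 → ℝ :=
  ![(t 0) ^ 2 - (t 1) ^ 2, (t 1) ^ 2 - (t 2) ^ 2, 2 * t 0 * t 1, 2 * t 1 * t 2, 2 * t 0 * t 2]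

lemma gammaH_castAdd (t : Fin 3 → ℝ) (i : Fin 3) : gammaH t (Fin.castAdd 5 i) = t i := by
  fin_cases i <;> rfl

lemma gammaH_natAdd (t : Fin 3 → ℝ) (j : Fin 5) : gammaH t (Fin.natAdd 3 j) = phiH t j := by
  fin_cases j <;> rfl

lemma measurable_gammaH : Measurable gammaH := by
  apply measurable_pi_lambda
  intro i
  fin_cases i
  · exact measurable_pi_apply 0
  · exact measurable_pi_apply 1
  · exact measurable_pi_apply 2
  · exact ((measurable_pi_apply 0).pow_const 2).sub ((measurable_pi_apply 1).pow_const 2)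
  · exact ((measurable_pi_apply 1).pow_const 2).sub ((measurable_pi_apply 2).pow_const 2)
  · exact (((measurable_pi_apply 0).const_mul 2).mul (measurable_pi_apply 1))
  · exact (((measurable_pi_apply 1).const_mul 2).mul (measurable_pi_apply 2))
  · exact (((measurable_pi_apply 0).const_mul 2).mul (measurable_pi_apply 2))

lemma measurable_phiH : Measurable phiH := by
  apply measurable_pi_lambda
  intro i
  fin_cases i
  · exact ((measurable_pi_apply 0).pow_const 2).sub ((measurable_pi_apply 1).pow_const 2)
  · exact ((measurable_pi_apply 1).pow_const 2).sub ((measurable_pi_apply 2).pow_const 2)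
  · exact (((measurable_pi_apply 0).const_mul 2).mul (measurable_pi_apply 1))
  · exact (((measurable_pi_apply 1).const_mul 2).mul (measurable_pi_apply 2))
  · exact (((measurable_pi_apply 0).const_mul 2).mul (measurable_pi_apply 2))

lemma phiH_lip {s t : Fin 3 → ℝ} {R ρ : ℝ}
    (hs : ∀ i, |s i| ≤ R) (ht : ∀ i, |t i| ≤ R) (hst : ∀ i, |t i - s i| ≤ ρ) (j : Fin 5) :
    |phiH t j - phiH s j| ≤ 4 * R * ρ := by
  have key : ∀ a b c d : ℝ, |a| ≤ R → |b| ≤ R → |c| ≤ R → |d| ≤ R →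
      |c - a| ≤ ρ → |d - b| ≤ ρ → |c * d - a * b| ≤ 2 * R * ρ := by
    intro a b c d ha hb hc hd hca hdb
    have : c * d - a * b = c * (d - b) + b * (c - a) := by ring
    rw [this]
    calc |c * (d - b) + b * (c - a)| ≤ |c * (d - b)| + |b * (c - a)| := abs_add_le _ _
      _ = |c| * |d - b| + |b| * |c - a| := by rw [abs_mul, abs_mul]
      _ ≤ R * ρ + R * ρ := by
          have h0 : (0:ℝ) ≤ ρ := le_trans (abs_nonneg _) hca
          have hR : (0:ℝ) ≤ R := le_trans (abs_nonneg _) ha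
          gcongr
      _ = 2 * R * ρ := by ring
  have sq : ∀ i : Fin 3, |t i * t i - s i * s i| ≤ 2 * R * ρ := fun i =>
    key _ _ _ _ (hs i) (hs i) (ht i) (ht i) (hst i) (hst i)
  have pr : ∀ i k : Fin 3, |t i * t k - s i * s k| ≤ 2 * R * ρ := fun i k =>
    key _ _ _ _ (hs i) (hs k) (ht i) (ht k) (hst i) (hst k)
  fin_cases j
  · show |t 0 ^ 2 - t 1 ^ 2 - (s 0 ^ 2 - s 1 ^ 2)| ≤ 4 * R * ρ
    have h1 := sq 0; have h2 := sq 1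
    have : t 0 ^ 2 - t 1 ^ 2 - (s 0 ^ 2 - s 1 ^ 2)
        = (t 0 * t 0 - s 0 * s 0) - (t 1 * t 1 - s 1 * s 1) := by ring
    rw [this]
    calc |_ - _| ≤ |t 0 * t 0 - s 0 * s 0| + |t 1 * t 1 - s 1 * s 1| := abs_sub _ _
      _ ≤ 2 * R * ρ + 2 * R * ρ := add_le_add h1 h2
      _ = 4 * R * ρ := by ring
  · show |t 1 ^ 2 - t 2 ^ 2 - (s 1 ^ 2 - s 2 ^ 2)| ≤ 4 * R * ρ
    have h1 := sq 1; have h2 := sq 2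
    have : t 1 ^ 2 - t 2 ^ 2 - (s 1 ^ 2 - s 2 ^ 2)
        = (t 1 * t 1 - s 1 * s 1) - (t 2 * t 2 - s 2 * s 2) := by ring
    rw [this]
    calc |_ - _| ≤ |t 1 * t 1 - s 1 * s 1| + |t 2 * t 2 - s 2 * s 2| := abs_sub _ _
      _ ≤ 2 * R * ρ + 2 * R * ρ := add_le_add h1 h2
      _ = 4 * R * ρ := by ring
  · show |2 * t 0 * t 1 - 2 * s 0 * s 1| ≤ 4 * R * ρ
    have h := pr 0 1
    have : 2 * t 0 * t 1 - 2 * s 0 * s 1 = 2 * (t 0 * t 1 - s 0 * s 1) := by ring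
    rw [this, abs_mul, abs_two]
    linarith [abs_nonneg (t 0 * t 1 - s 0 * s 1)]
  · show |2 * t 1 * t 2 - 2 * s 1 * s 2| ≤ 4 * R * ρ
    have h := pr 1 2
    have : 2 * t 1 * t 2 - 2 * s 1 * s 2 = 2 * (t 1 * t 2 - s 1 * s 2) := by ring
    rw [this, abs_mul, abs_two]
    linarith [abs_nonneg (t 1 * t 2 - s 1 * s 2)]
  · show |2 * t 0 * t 2 - 2 * s 0 * s 2| ≤ 4 * R * ρ
    have h := pr 0 2
    have : 2 * t 0 * t 2 - 2 * s 0 * s 2 = 2 * (t 0 * t 2 - s 0 * s 2) := by ring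
    rw [this, abs_mul, abs_two]
    linarith [abs_nonneg (t 0 * t 2 - s 0 * s 2)]

noncomputable def splitE : (Fin 8 → ℝ) ≃ᵐ (Fin 3 → ℝ) × (Fin 5 → ℝ) :=
  (MeasurableEquiv.piCongrLeft (fun _ : Fin 8 => ℝ)
      (finSumFinEquiv : Fin 3 ⊕ Fin 5 ≃ Fin 8)).symm.trans
    (MeasurableEquiv.sumPiEquivProdPi fun _ : Fin 3 ⊕ Fin 5 => ℝ)

lemma splitE_mp : MeasurePreserving splitE volume volume := by
  have h1 := (volume_measurePreserving_piCongrLeft (fun _ : Fin 8 => ℝ)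
      (finSumFinEquiv : Fin 3 ⊕ Fin 5 ≃ Fin 8)).symm
    (MeasurableEquiv.piCongrLeft (fun _ : Fin 8 => ℝ) (finSumFinEquiv : Fin 3 ⊕ Fin 5 ≃ Fin 8))
  have h2 := volume_measurePreserving_sumPiEquivProdPi (fun _ : Fin 3 ⊕ Fin 5 => ℝ)
  exact h2.comp h1

lemma splitE_apply (x : Fin 8 → ℝ) :
    splitE x = (fun i => x (Fin.castAdd 5 i), fun j => x (Fin.natAdd 3 j)) := by
  ext j
  · simp only [splitE, MeasurableEquiv.trans_apply,
      MeasurableEquiv.coe_mk, MeasurableEquiv.sumPiEquivProdPi, MeasurableEquiv.piCongrLeft,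
      Equiv.sumPiEquivProdPi, Equiv.coe_fn_mk, Equiv.piCongrLeft]
    exact congrArg x (finSumFinEquiv_apply_left j)
  · simp only [splitE, MeasurableEquiv.trans_apply,
      MeasurableEquiv.coe_mk, MeasurableEquiv.sumPiEquivProdPi, MeasurableEquiv.piCongrLeft,
      Equiv.sumPiEquivProdPi, Equiv.coe_fn_mk, Equiv.piCongrLeft]
    exact congrArg x (finSumFinEquiv_apply_right j)

/-- A tube of width `r` around the graph of `g` over `S`, inside `ℝ⁸`. -/
def tubeSet (S : Set (Fin 3 → ℝ)) (g : (Fin 3 → ℝ) → Fin 5 → ℝ) (r : ℝ) :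
    Set (Fin 8 → ℝ) :=
  {x | (fun i => x (Fin.castAdd 5 i)) ∈ S ∧
    ∀ j : Fin 5, |x (Fin.natAdd 3 j) - g (fun i => x (Fin.castAdd 5 i)) j| ≤ r}

lemma mem_tubeSet {S : Set (Fin 3 → ℝ)} {g : (Fin 3 → ℝ) → Fin 5 → ℝ} {r : ℝ}
    {x : Fin 8 → ℝ} :
    x ∈ tubeSet S g r ↔ (fun i => x (Fin.castAdd 5 i)) ∈ S ∧
      ∀ j : Fin 5, |x (Fin.natAdd 3 j) - g (fun i => x (Fin.castAdd 5 i)) j| ≤ r :=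
  Iff.rfl

private def tubeSetProd (S : Set (Fin 3 → ℝ)) (g : (Fin 3 → ℝ) → Fin 5 → ℝ) (r : ℝ) :
    Set ((Fin 3 → ℝ) × (Fin 5 → ℝ)) :=
  {p | p.1 ∈ S ∧ ∀ j : Fin 5, |p.2 j - g p.1 j| ≤ r}

lemma tubeSetProd_measurable {S : Set (Fin 3 → ℝ)} (hS : MeasurableSet S)
    {g : (Fin 3 → ℝ) → Fin 5 → ℝ} (hg : Measurable g) (r : ℝ) :
    MeasurableSet (tubeSetProd S g r) := by
  have h1 : MeasurableSet {p : (Fin 3 → ℝ) × (Fin 5 → ℝ) | p.1 ∈ S} := measurable_fst hS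
  have h2 : MeasurableSet
      {p : (Fin 3 → ℝ) × (Fin 5 → ℝ) | ∀ j : Fin 5, |p.2 j - g p.1 j| ≤ r} := by
    rw [Set.setOf_forall]
    apply MeasurableSet.iInter
    intro j
    have : Measurable fun p : (Fin 3 → ℝ) × (Fin 5 → ℝ) => |p.2 j - g p.1 j| :=
      (((measurable_pi_apply j).comp measurable_snd).sub
        ((measurable_pi_apply j).comp (hg.comp measurable_fst))).abs
    exact measurableSet_le this measurable_const
  exact h1.inter h2

lemma tubeSet_eq_preimage (S : Set (Fin 3 → ℝ)) (g : (Fin 3 → ℝ) → Fin 5 → ℝ) (r : ℝ) :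
    tubeSet S g r = splitE ⁻¹' (tubeSetProd S g r) := by
  ext x
  simp only [tubeSet, tubeSetProd, Set.mem_preimage, splitE_apply, Set.mem_setOf_eq]

lemma tubeSet_measurable {S : Set (Fin 3 → ℝ)} (hS : MeasurableSet S)
    {g : (Fin 3 → ℝ) → Fin 5 → ℝ} (hg : Measurable g) (r : ℝ) :
    MeasurableSet (tubeSet S g r) := by
  rw [tubeSet_eq_preimage]
  exact splitE.measurable (tubeSetProd_measurable hS hg r)

lemma tubeSet_volume {S : Set (Fin 3 → ℝ)} (hS : MeasurableSet S)
    {g : (Fin 3 → ℝ) → Fin 5 → ℝ} (hg : Measurable g) (r : ℝ) :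
    volume (tubeSet S g r) = volume S * ENNReal.ofReal (2 * r) ^ 5 := by
  have hT2m := tubeSetProd_measurable hS hg r
  rw [tubeSet_eq_preimage, splitE_mp.measure_preimage hT2m.nullMeasurableSet]
  rw [Measure.volume_eq_prod, Measure.prod_apply hT2m]
  have hfib : ∀ a : Fin 3 → ℝ, volume (Prod.mk a ⁻¹' tubeSetProd S g r)
      = S.indicator (fun _ => ENNReal.ofReal (2 * r) ^ 5) a := by
    intro a
    by_cases ha : a ∈ S
    · have : Prod.mk a ⁻¹' tubeSetProd S g r
          = Icc (fun j => g a j - r) (fun j => g a j + r) := by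
        ext b
        simp only [tubeSetProd, Set.mem_preimage, Set.mem_setOf_eq, ha, true_and,
          Set.mem_Icc, Pi.le_def]
        constructor
        · intro hb
          constructor <;> intro j <;> have := abs_le.1 (hb j) <;> linarith [this.1, this.2]
        · intro hb j
          rw [abs_le]
          constructor <;> linarith [hb.1 j, hb.2 j]
      rw [this, Real.volume_Icc_pi, Set.indicator_of_mem ha]
      have h2r : ∀ j : Fin 5, (g a j + r) - (g a j - r) = 2 * r := fun j => by ring
      simp_rw [h2r]
      simp [Finset.prod_const]
    · have : Prod.mk a ⁻¹' tubeSetProd S g r = ∅ := by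
        ext b; simp [tubeSetProd, ha]
      rw [this, Set.indicator_of_notMem ha]
      simp
  simp_rw [hfib]
  rw [lintegral_indicator_const hS, mul_comm]

lemma volume_Icc_pi_const {n : ℕ} (a b : ℝ) (hab : a ≤ b) :
    volume (Icc (fun _ => a : Fin n → ℝ) (fun _ => b)) = ENNReal.ofReal ((b - a) ^ n) := by
  rw [Real.volume_Icc_pi]
  simp only [Finset.prod_const, Finset.card_univ, Fintype.card_fin]
  rw [← ENNReal.ofReal_pow (by linarith)]

lemma integral_lower (A : Set (Fin 8 → ℝ)) (hA : MeasurableSet A) (x : Fin 8 → ℝ)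
    (s : Fin 3 → ℝ) (ρ : ℝ) (hρ : 0 < ρ) (hbox : ∀ i, -1 ≤ s i - ρ ∧ s i + ρ ≤ 1)
    (H : ∀ t : Fin 3 → ℝ, (∀ i, |t i - s i| ≤ ρ) → x + gammaH t ∈ A) :
    (2 * ρ) ^ 3 ≤ ∫ t in Icc (-1 : Fin 3 → ℝ) 1, A.indicator (fun _ => (1:ℝ)) (x + gammaH t) := by
  set B : Set (Fin 3 → ℝ) := (fun t => x + gammaH t) ⁻¹' A with hB
  have hBm : MeasurableSet B := (measurable_const.add measurable_gammaH) hA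
  have hfeq : ∀ t, A.indicator (fun _ => (1:ℝ)) (x + gammaH t) = B.indicator (fun _ => 1) t := by
    intro t
    by_cases ht : x + gammaH t ∈ A
    · rw [Set.indicator_of_mem (show t ∈ B from ht), Set.indicator_of_mem ht]
    · rw [Set.indicator_of_notMem (show t ∉ B from ht), Set.indicator_of_notMem ht]
  simp_rw [hfeq]
  set C : Set (Fin 3 → ℝ) := Icc (fun i => s i - ρ) (fun i => s i + ρ) with hCdef
  have hCm : MeasurableSet C := measurableSet_Icc
  have hCB : C ⊆ B := by
    intro t ht
    rw [Set.mem_Icc] at ht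
    apply H
    intro i
    have h1 : s i - ρ ≤ t i := ht.1 i
    have h2 : t i ≤ s i + ρ := ht.2 i
    rw [abs_le]
    exact ⟨by linarith, by linarith⟩
  have hCIcc : C ⊆ Icc (-1 : Fin 3 → ℝ) 1 := by
    intro t ht
    rw [Set.mem_Icc] at ht ⊢
    constructor <;> intro i
    · have h0 := (hbox i).1
      have h1 : s i - ρ ≤ t i := ht.1 i
      show (-1 : Fin 3 → ℝ) i ≤ t i
      simp only [Pi.neg_apply, Pi.one_apply]
      linarith
    · have h0 := (hbox i).2
      have h1 : t i ≤ s i + ρ := ht.2 i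
      show t i ≤ (1 : Fin 3 → ℝ) i
      simp only [Pi.one_apply]
      linarith
  have hfin : volume (Icc (-1 : Fin 3 → ℝ) 1) < ⊤ := by
    have heq : volume (Icc (-1 : Fin 3 → ℝ) 1) = ENNReal.ofReal ((1 - (-1)) ^ 3) := by
      have h := volume_Icc_pi_const (n := 3) (-1) 1 (by norm_num)
      convert h using 2
      rfl
    rw [heq]; exact ENNReal.ofReal_lt_top
  have hrestrfin : ∀ D : Set (Fin 3 → ℝ), MeasurableSet D →
      (volume.restrict (Icc (-1 : Fin 3 → ℝ) 1)) D < ⊤ := by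
    intro D hD
    rw [Measure.restrict_apply hD]
    exact lt_of_le_of_lt (measure_mono Set.inter_subset_right) hfin
  have hIntB : Integrable (B.indicator fun _ => (1:ℝ))
      (volume.restrict (Icc (-1 : Fin 3 → ℝ) 1)) := by
    rw [integrable_indicator_iff hBm]
    exact integrableOn_const (hrestrfin B hBm).ne
  have hIntC : Integrable (C.indicator fun _ => (1:ℝ))
      (volume.restrict (Icc (-1 : Fin 3 → ℝ) 1)) := by
    rw [integrable_indicator_iff hCm]
    exact integrableOn_const (hrestrfin C hCm).ne
  have hmono : ∀ t, C.indicator (fun _ => (1:ℝ)) t ≤ B.indicator (fun _ => 1) t := fun t =>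
    Set.indicator_le_indicator_of_subset hCB (fun _ => zero_le_one) t
  have step1 : ∫ t in Icc (-1 : Fin 3 → ℝ) 1, C.indicator (fun _ => (1:ℝ)) t
      ≤ ∫ t in Icc (-1 : Fin 3 → ℝ) 1, B.indicator (fun _ => 1) t :=
    integral_mono hIntC hIntB hmono
  have step2 : ∫ t in Icc (-1 : Fin 3 → ℝ) 1, C.indicator (fun _ => (1:ℝ)) t = (2 * ρ) ^ 3 := by
    rw [integral_indicator hCm]
    rw [Measure.restrict_restrict hCm]
    rw [Set.inter_eq_self_of_subset_left hCIcc]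
    rw [setIntegral_const]
    have hvol : volume C = ENNReal.ofReal ((2 * ρ) ^ 3) := by
      rw [hCdef, Real.volume_Icc_pi]
      have h2ρ : ∀ i : Fin 3, (s i + ρ) - (s i - ρ) = 2 * ρ := fun i => by ring
      simp_rw [h2ρ]
      simp only [Finset.prod_const, Finset.card_univ, Fintype.card_fin]
      rw [← ENNReal.ofReal_pow (by linarith)]
    rw [measureReal_def, hvol, ENNReal.toReal_ofReal (by positivity), smul_eq_mul, mul_one]
  linarith [step1, step2.symm.le]

lemma eLpNorm_ge {u : (Fin 8 → ℝ) → ℝ} (hu : ∀ z, 0 ≤ u z) {T : Set (Fin 8 → ℝ)}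
    (hT : MeasurableSet T) (hT0 : volume T ≠ 0) {c : ℝ} (hc : 0 ≤ c)
    (hle : ∀ z ∈ T, c ≤ u z) {q : ℝ≥0∞} (hq : q ≠ 0) :
    ENNReal.ofReal c * volume T ^ q⁻¹.toReal ≤ eLpNorm u q volume := by
  have h1 : eLpNorm (T.indicator fun _ => c) q volume ≤ eLpNorm u q volume := by
    apply eLpNorm_mono
    intro z
    by_cases hz : z ∈ T
    · rw [Set.indicator_of_mem hz]
      rw [Real.norm_eq_abs, Real.norm_eq_abs, abs_of_nonneg hc, abs_of_nonneg (hu z)]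
      exact hle z hz
    · rw [Set.indicator_of_notMem hz]
      simp [norm_nonneg]
  have h2 : eLpNorm (T.indicator fun _ => c) q volume
      = ENNReal.ofReal c * volume T ^ q⁻¹.toReal := by
    rw [eLpNorm_indicator_const' hT hT0 hq]
    congr 1
    · exact (Real.enorm_eq_ofReal hc)
    · rw [ENNReal.toReal_inv, one_div]
  rw [← h2]; exact h1

lemma mem_triangle {x y : ℝ} (h1 : y ≤ x) (h2 : 8*x - 5*y ≤ 3) (h3 : 5*x ≤ 8*y) :
    (x, y) ∈ convexHull ℝ {((0 : ℝ), (0 : ℝ)), (1, 1), (8/13, 5/13)} := by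
  set a := (3 - 8*x + 5*y)/3 with ha
  set b := (8*y - 5*x)/3 with hb
  set c := (13*(x - y))/3 with hcdef
  have hs : Convex ℝ (convexHull ℝ {((0:ℝ),(0:ℝ)), (1,1), (8/13, 5/13)}) := convex_convexHull _ _
  have h0 : ((0:ℝ),(0:ℝ)) ∈ convexHull ℝ {((0:ℝ),(0:ℝ)), (1,1), (8/13, 5/13)} :=
    subset_convexHull _ _ (by simp)
  have hOne : ((1:ℝ),(1:ℝ)) ∈ convexHull ℝ {((0:ℝ),(0:ℝ)), (1,1), (8/13, 5/13)} :=
    subset_convexHull _ _ (by simp)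
  have hV : ((8/13:ℝ),(5/13:ℝ)) ∈ convexHull ℝ {((0:ℝ),(0:ℝ)), (1,1), (8/13, 5/13)} :=
    subset_convexHull _ _ (by simp)
  have key := hs.sum_mem (t := Finset.univ) (w := ![a, b, c])
    (z := ![((0:ℝ),(0:ℝ)), (1,1), (8/13, 5/13)])
    (by
      intro i _
      fin_cases i
      · show (0:ℝ) ≤ a; rw [ha]; linarith
      · show (0:ℝ) ≤ b; rw [hb]; linarith
      · show (0:ℝ) ≤ c; rw [hcdef]; linarith)
    (by
      rw [Fin.sum_univ_three]
      show a + b + c = 1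
      rw [ha, hb, hcdef]; ring)
    (by
      intro i _
      fin_cases i
      · exact h0
      · exact hOne
      · exact hV)
  rw [Fin.sum_univ_three] at key
  convert key using 1
  show (x, y) = a • ((0:ℝ),(0:ℝ)) + b • ((1:ℝ),(1:ℝ)) + c • ((8/13:ℝ),(5/13:ℝ))
  simp only [Prod.smul_mk, smul_eq_mul, Prod.mk_add_mk]
  rw [Prod.mk.injEq]
  constructor
  · rw [ha, hb, hcdef]; ring
  · rw [ha, hb, hcdef]; ring

lemma no_small {c₁ c₂ u v : ℝ} (hc₁ : 0 < c₁) (hc₂ : 0 ≤ c₂) (huv : u < v)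
    (H : ∀ δ : ℝ, 0 < δ → δ ≤ 1 → c₁ * δ ^ u ≤ c₂ * δ ^ v) : False := by
  set w := v - u with hw
  have hw0 : 0 < w := by rw [hw]; linarith
  set base := c₁ / (2 * (c₂ + 1)) with hbase
  have hbase0 : 0 < base := by positivity
  set δ := min 1 (base ^ w⁻¹) with hδdef
  have hδ0 : 0 < δ := lt_min one_pos (Real.rpow_pos_of_pos hbase0 _)
  have hδ1 : δ ≤ 1 := min_le_left _ _
  have hkey := H δ hδ0 hδ1
  have hsplit : δ ^ v = δ ^ u * δ ^ w := by
    rw [← Real.rpow_add hδ0, hw]; ring_nf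
  have hbw : δ ^ w ≤ base := by
    have h1 : δ ≤ base ^ w⁻¹ := min_le_right _ _
    have h2 : δ ^ w ≤ (base ^ w⁻¹) ^ w := Real.rpow_le_rpow hδ0.le h1 hw0.le
    have h3 : (base ^ w⁻¹) ^ w = base := Real.rpow_inv_rpow hbase0.le hw0.ne'
    rw [h3] at h2
    exact h2
  have hu0 : 0 < δ ^ u := Real.rpow_pos_of_pos hδ0 _
  have hred : c₁ ≤ c₂ * δ ^ w := by
    rw [hsplit] at hkey
    exact le_of_mul_le_mul_right (by linarith [hkey] : c₁ * δ ^ u ≤ (c₂ * δ ^ w) * δ ^ u) hu0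
  have hfin : c₁ ≤ c₂ * base := hred.trans (mul_le_mul_of_nonneg_left hbw hc₂)
  have hd : 0 < 2 * (c₂ + 1) := by linarith
  have h5 : c₁ * (2 * (c₂ + 1)) ≤ c₂ * c₁ := by
    calc c₁ * (2 * (c₂ + 1)) ≤ (c₂ * base) * (2 * (c₂ + 1)) :=
          mul_le_mul_of_nonneg_right hfin hd.le
      _ = c₂ * c₁ := by rw [hbase]; field_simp
  nlinarith [h5, hc₁, hc₂]

/-- sharpness — if `q > p` and `(1/p, 1/q)` is outside the closed
triangle with vertices `(0,0)`, `(1,1)`, `(8/13, 5/13)`, no `L^p → L^q` bound holds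
for the averaging operator over the harmonic quadratic `3`-surface in `ℝ⁸`. -/
theorem statement5 (p q : ℝ≥0∞) (hp : 1 ≤ p) (hq : 1 ≤ q) (hpq : p < q)
    (h : (p⁻¹.toReal, q⁻¹.toReal) ∉
      convexHull ℝ {((0 : ℝ), (0 : ℝ)), (1, 1), (8/13, 5/13)}) :
    ¬ ∃ C : ℝ≥0, ∀ f : (Fin 8 → ℝ) → ℝ, MemLp f p volume → (∀ x, 0 ≤ f x) →
      eLpNorm (fun x => ∫ t in Icc (-1 : Fin 3 → ℝ) 1, f (x + gammaH t)) q volume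
        ≤ C * eLpNorm f p volume := by
  rintro ⟨C, hC⟩
  set ix := p⁻¹.toReal with hix
  set iy := q⁻¹.toReal with hiy
  have hp0 : p ≠ 0 := (lt_of_lt_of_le zero_lt_one hp).ne'
  have hq0 : q ≠ 0 := (lt_of_lt_of_le zero_lt_one hq).ne'
  have hpinv : p⁻¹ ≠ ∞ := ENNReal.inv_ne_top.2 hp0
  have hqinv : q⁻¹ ≠ ∞ := ENNReal.inv_ne_top.2 hq0
  have hyx : iy < ix := by
    rw [hix, hiy]
    exact (ENNReal.toReal_lt_toReal hqinv hpinv).2 (ENNReal.inv_lt_inv.2 hpq)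
  have hy0 : (0:ℝ) ≤ iy := ENNReal.toReal_nonneg
  have hx1 : ix ≤ 1 := by
    rw [hix]
    calc p⁻¹.toReal ≤ (1 : ℝ≥0∞).toReal :=
          ENNReal.toReal_mono (by simp) (ENNReal.inv_le_one.2 hp)
      _ = 1 := by simp
  have hcases : 3 < 8*ix - 5*iy ∨ 8*iy < 5*ix := by
    by_contra hcontra
    push_neg at hcontra
    exact h (mem_triangle hyx.le hcontra.1 hcontra.2)
  -- generic facts about indicator test functions
  have findic : ∀ (A : Set (Fin 8 → ℝ)), MeasurableSet A → volume A ≠ 0 → volume A ≠ ∞ →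
      eLpNorm (A.indicator fun _ => (1:ℝ)) p volume = volume A ^ ix := by
    intro A hA hA0 hAfin
    rw [eLpNorm_indicator_const' hA hA0 hp0]
    rw [hix, ENNReal.toReal_inv, one_div]
    simp
  -- nonnegativity of the averaged function
  have Snonneg : ∀ (A : Set (Fin 8 → ℝ)) (z : Fin 8 → ℝ),
      0 ≤ ∫ t in Icc (-1 : Fin 3 → ℝ) 1, A.indicator (fun _ => (1:ℝ)) (z + gammaH t) := by
    intro A z
    apply integral_nonneg
    intro t
    exact Set.indicator_nonneg (fun _ _ => zero_le_one) _
  rcases hcases with hcase | hcase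
  · -- Case A : small ball counterexample, 8/p - 5/q > 3
    apply no_small (c₁ := (1:ℝ)/512) (c₂ := (C:ℝ) * (2:ℝ) ^ (8*ix))
      (u := 3 + 5*iy) (v := 8*ix) (by norm_num)
      (by positivity) (by linarith)
    intro δ hδ0 hδ1
    set A : Set (Fin 8 → ℝ) := Icc (fun _ => -δ) (fun _ => δ) with hAdef
    have hAm : MeasurableSet A := measurableSet_Icc
    have hAvol : volume A = ENNReal.ofReal ((2*δ)^8) := by
      rw [hAdef, volume_Icc_pi_const (-δ) δ (by linarith)]
      norm_num
      ring_nf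
    have hAvol0 : volume A ≠ 0 := by
      rw [hAvol]
      exact (ENNReal.ofReal_pos.2 (by positivity)).ne'
    have hAvolfin : volume A ≠ ∞ := by rw [hAvol]; exact ENNReal.ofReal_ne_top
    set f : (Fin 8 → ℝ) → ℝ := A.indicator (fun _ => 1) with hfdef
    have hmem : MemLp f p volume := memLp_indicator_const p hAm 1 (Or.inr hAvolfin)
    have hnn : ∀ z, 0 ≤ f z := fun z => Set.indicator_nonneg (fun _ _ => zero_le_one) _
    have hbound := hC f hmem hnn
    -- the tube where the average is large
    set Sbase : Set (Fin 3 → ℝ) := Icc (fun _ => -(1/2)) (fun _ => 1/2) with hSdef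
    have hSm : MeasurableSet Sbase := measurableSet_Icc
    set g : (Fin 3 → ℝ) → Fin 5 → ℝ := fun av => fun j => -phiH (-av) j with hgdef
    have hgm : Measurable g := by
      apply measurable_pi_lambda
      intro j
      exact ((measurable_pi_apply j).comp (measurable_phiH.comp measurable_neg)).neg
    set T : Set (Fin 8 → ℝ) := tubeSet Sbase g (δ/2) with hTdef
    have hTm : MeasurableSet T := tubeSet_measurable hSm hgm _
    have hTvol : volume T = ENNReal.ofReal (δ^5) := by
      rw [hTdef, tubeSet_volume hSm hgm _]
      rw [hSdef, volume_Icc_pi_const (-(1/2)) (1/2) (by norm_num)]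
      have h1 : ((1:ℝ)/2 - -(1/2)) ^ 3 = 1 := by norm_num
      have hhalf : (2:ℝ) * (δ/2) = δ := by ring
      rw [h1, hhalf, ← ENNReal.ofReal_pow hδ0.le]
      simp
    have hTvol0 : volume T ≠ 0 := by
      rw [hTvol]
      exact (ENNReal.ofReal_pos.2 (by positivity)).ne'
    -- the pointwise lower bound on the tube
    have hle : ∀ z ∈ T, (2*(δ/16))^3 ≤ ∫ t in Icc (-1 : Fin 3 → ℝ) 1, f (z + gammaH t) := by
      intro z hz
      rw [hTdef, mem_tubeSet] at hz
      obtain ⟨hz1, hz2⟩ := hz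
      rw [hSdef, Set.mem_Icc] at hz1
      have hz1' : ∀ i, -(1/2) ≤ z (Fin.castAdd 5 i) ∧ z (Fin.castAdd 5 i) ≤ 1/2 :=
        fun i => ⟨hz1.1 i, hz1.2 i⟩
      apply integral_lower A hAm z (fun i => -(z (Fin.castAdd 5 i))) (δ/16) (by linarith)
      · intro i
        have h1 := hz1' i
        constructor
        · show -1 ≤ -(z (Fin.castAdd 5 i)) - δ/16
          linarith [h1.2]
        · show -(z (Fin.castAdd 5 i)) + δ/16 ≤ 1
          linarith [h1.1]
      · intro t ht
        set sv : Fin 3 → ℝ := fun i => -(z (Fin.castAdd 5 i)) with hsv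
        have hs_bd : ∀ i, |sv i| ≤ 1 := by
          intro i
          rw [hsv, abs_le]
          have := hz1' i
          constructor <;> simp <;> linarith [this.1, this.2]
        have ht_bd : ∀ i, |t i| ≤ 1 := by
          intro i
          have h1 := abs_le.1 (ht i)
          have h2 := hz1' i
          rw [abs_le]
          constructor <;> linarith [h1.1, h1.2, h2.1, h2.2]
        have hphi : ∀ j, |phiH t j - phiH sv j| ≤ 4 * 1 * (δ/16) :=
          phiH_lip hs_bd ht_bd ht
        have habs : ∀ i' : Fin 8, |z i' + gammaH t i'| ≤ δ := by
          intro i'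
          obtain ⟨w, rfl⟩ := (finSumFinEquiv : Fin 3 ⊕ Fin 5 ≃ Fin 8).surjective i'
          cases w with
          | inl i =>
            rw [finSumFinEquiv_apply_left, gammaH_castAdd]
            have : z (Fin.castAdd 5 i) + t i = t i - sv i := by rw [hsv]; ring
            rw [this]
            calc |t i - sv i| ≤ δ/16 := ht i
              _ ≤ δ := by linarith
          | inr j =>
            rw [finSumFinEquiv_apply_right, gammaH_natAdd]
            have hgz : g (fun i => z (Fin.castAdd 5 i)) j = -phiH sv j := by
              show -phiH (-(fun i => z (Fin.castAdd 5 i))) j = -phiH sv j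
              have hneg : (-(fun i => z (Fin.castAdd 5 i)) : Fin 3 → ℝ) = sv := by
                funext i
                show -(z (Fin.castAdd 5 i)) = sv i
                rw [hsv]
              rw [hneg]
            have hz2j := hz2 j
            rw [hgz] at hz2j
            have hdecomp : z (Fin.natAdd 3 j) + phiH t j
                = (z (Fin.natAdd 3 j) - -phiH sv j) + (phiH t j - phiH sv j) := by ring
            rw [hdecomp]
            calc |(z (Fin.natAdd 3 j) - -phiH sv j) + (phiH t j - phiH sv j)|
                ≤ |z (Fin.natAdd 3 j) - -phiH sv j| + |phiH t j - phiH sv j| := abs_add_le _ _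
              _ ≤ δ/2 + 4 * 1 * (δ/16) := add_le_add hz2j (hphi j)
              _ ≤ δ := by linarith
        rw [hAdef, Set.mem_Icc]
        constructor <;> intro i' <;> have := abs_le.1 (habs i')
        · show (fun _ => -δ) i' ≤ (z + gammaH t) i'
          simpa using this.1
        · show (z + gammaH t) i' ≤ (fun _ => δ) i'
          simpa using this.2
    -- combine
    have hlow := eLpNorm_ge (Snonneg A)
      hTm hTvol0 (show (0:ℝ) ≤ (2*(δ/16))^3 by positivity) hle hq0
    have hchain : ENNReal.ofReal ((2*(δ/16))^3) * volume T ^ iy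
        ≤ (C : ℝ≥0∞) * volume A ^ ix := by
      calc ENNReal.ofReal ((2*(δ/16))^3) * volume T ^ iy
          ≤ eLpNorm (fun z => ∫ t in Icc (-1 : Fin 3 → ℝ) 1, f (z + gammaH t)) q volume := hlow
        _ ≤ C * eLpNorm f p volume := hbound
        _ = C * volume A ^ ix := by rw [findic A hAm hAvol0 hAvolfin]
    rw [hTvol, hAvol] at hchain
    rw [ENNReal.ofReal_rpow_of_pos (by positivity), ENNReal.ofReal_rpow_of_pos (by positivity)]
      at hchain
    rw [← ENNReal.ofReal_mul (by positivity), ← ENNReal.ofReal_coe_nnreal,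
      ← ENNReal.ofReal_mul (by positivity)] at hchain
    have hreal : (2*(δ/16))^3 * (δ^5)^iy ≤ (C:ℝ) * ((2*δ)^8)^ix :=
      (ENNReal.ofReal_le_ofReal_iff (by positivity)).1 hchain
    -- rewrite into rpow normal form
    have hL : (1:ℝ)/512 * δ ^ (3 + 5*iy) = (2*(δ/16))^3 * (δ^5)^iy := by
      rw [Real.rpow_add hδ0]
      have e1 : δ ^ (3:ℝ) = δ ^ (3:ℕ) := Real.rpow_natCast δ 3
      have e2 : δ ^ (5*iy) = (δ ^ (5:ℕ)) ^ iy := by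
        rw [← Real.rpow_natCast_mul hδ0.le]
        norm_num
      rw [e1, e2]
      ring
    have hR : (C:ℝ) * ((2*δ)^8)^ix = ((C:ℝ) * (2:ℝ)^(8*ix)) * δ ^ (8*ix) := by
      have e3 : ((2*δ:ℝ)^(8:ℕ))^ix = (2*δ) ^ ((8:ℝ)*ix) := by
        rw [← Real.rpow_natCast_mul (by linarith)]
        norm_num
      rw [e3, Real.mul_rpow (by norm_num) hδ0.le]
      ring
    rw [hL, ← hR]
    exact hreal
  · -- Case B : thickened surface counterexample, 5/p > 8/q
    apply no_small (c₁ := 8 * ((256:ℝ)) ^ iy) (c₂ := (C:ℝ) * ((64 * 18^5 : ℝ)) ^ ix)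
      (u := 8*iy) (v := 5*ix) (by positivity) (by positivity) (by linarith)
    intro δ hδ0 hδ1
    set Sbase : Set (Fin 3 → ℝ) := Icc (fun _ => -2) (fun _ => 2) with hSdef
    have hSm : MeasurableSet Sbase := measurableSet_Icc
    set A : Set (Fin 8 → ℝ) := tubeSet Sbase phiH (9*δ) with hAdef
    have hAm : MeasurableSet A := tubeSet_measurable hSm measurable_phiH _
    have hAvol : volume A = ENNReal.ofReal (64 * (18*δ)^5) := by
      rw [hAdef, tubeSet_volume hSm measurable_phiH _]
      rw [hSdef, volume_Icc_pi_const (-2) 2 (by norm_num)]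
      have h1 : ((2:ℝ) - (-2))^3 = 64 := by norm_num
      have h2 : (2:ℝ) * (9*δ) = 18*δ := by ring
      rw [h1, h2, ← ENNReal.ofReal_pow (by positivity), ← ENNReal.ofReal_mul (by norm_num)]
    have hAvol0 : volume A ≠ 0 := by
      rw [hAvol]
      exact (ENNReal.ofReal_pos.2 (by positivity)).ne'
    have hAvolfin : volume A ≠ ∞ := by rw [hAvol]; exact ENNReal.ofReal_ne_top
    set f : (Fin 8 → ℝ) → ℝ := A.indicator (fun _ => 1) with hfdef
    have hmem : MemLp f p volume := memLp_indicator_const p hAm 1 (Or.inr hAvolfin)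
    have hnn : ∀ z, 0 ≤ f z := fun z => Set.indicator_nonneg (fun _ _ => zero_le_one) _
    have hbound := hC f hmem hnn
    set T : Set (Fin 8 → ℝ) := Icc (fun _ => -δ) (fun _ => δ) with hTdef
    have hTm : MeasurableSet T := measurableSet_Icc
    have hTvol : volume T = ENNReal.ofReal ((2*δ)^8) := by
      rw [hTdef, volume_Icc_pi_const (-δ) δ (by linarith)]
      norm_num
      ring_nf
    have hTvol0 : volume T ≠ 0 := by
      rw [hTvol]
      exact (ENNReal.ofReal_pos.2 (by positivity)).ne'
    have hle : ∀ z ∈ T, (2*(1:ℝ))^3 ≤ ∫ t in Icc (-1 : Fin 3 → ℝ) 1, f (z + gammaH t) := by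
      intro z hz
      rw [hTdef, Set.mem_Icc] at hz
      have hzb : ∀ i' : Fin 8, |z i'| ≤ δ := by
        intro i'
        rw [abs_le]
        exact ⟨hz.1 i', hz.2 i'⟩
      apply integral_lower A hAm z (fun _ => 0) 1 one_pos
      · intro i; norm_num
      · intro t ht
        simp only [sub_zero] at ht
        set av : Fin 3 → ℝ := fun i => z (Fin.castAdd 5 i) + t i with hav
        have hav_bd : ∀ i, |av i| ≤ 2 := by
          intro i
          have h1 := abs_le.1 (hzb (Fin.castAdd 5 i))
          have h2 := abs_le.1 (ht i)
          rw [hav, abs_le]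
          constructor <;> simp <;> linarith [h1.1, h1.2, h2.1, h2.2]
        have ht_bd : ∀ i, |t i| ≤ 2 := by
          intro i
          have h2 := abs_le.1 (ht i)
          rw [abs_le]; constructor <;> linarith [h2.1, h2.2]
        have htav : ∀ i, |t i - av i| ≤ δ := by
          intro i
          have : t i - av i = -(z (Fin.castAdd 5 i)) := by rw [hav]; ring
          rw [this, abs_neg]
          exact hzb _
        have hphi : ∀ j, |phiH t j - phiH av j| ≤ 4 * 2 * δ := phiH_lip hav_bd ht_bd htav
        rw [hAdef, mem_tubeSet]
        have hfst : (fun i => (z + gammaH t) (Fin.castAdd 5 i)) = av := by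
          funext i
          show z (Fin.castAdd 5 i) + gammaH t (Fin.castAdd 5 i) = av i
          rw [gammaH_castAdd, hav]
        constructor
        · rw [hfst, hSdef, Set.mem_Icc]
          constructor <;> intro i <;> have := abs_le.1 (hav_bd i)
          · exact this.1
          · exact this.2
        · intro j
          rw [hfst]
          show |(z + gammaH t) (Fin.natAdd 3 j) - phiH av j| ≤ 9*δ
          have : (z + gammaH t) (Fin.natAdd 3 j) = z (Fin.natAdd 3 j) + phiH t j := by
            show z (Fin.natAdd 3 j) + gammaH t (Fin.natAdd 3 j) = _
            rw [gammaH_natAdd]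
          rw [this]
          have hdecomp : z (Fin.natAdd 3 j) + phiH t j - phiH av j
              = z (Fin.natAdd 3 j) + (phiH t j - phiH av j) := by ring
          rw [hdecomp]
          calc |z (Fin.natAdd 3 j) + (phiH t j - phiH av j)|
              ≤ |z (Fin.natAdd 3 j)| + |phiH t j - phiH av j| := abs_add_le _ _
            _ ≤ δ + 4 * 2 * δ := add_le_add (hzb _) (hphi j)
            _ = 9*δ := by ring
    have hlow := eLpNorm_ge (Snonneg A)
      hTm hTvol0 (show (0:ℝ) ≤ (2*(1:ℝ))^3 by positivity) hle hq0
    have hchain : ENNReal.ofReal ((2*(1:ℝ))^3) * volume T ^ iy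
        ≤ (C : ℝ≥0∞) * volume A ^ ix := by
      calc ENNReal.ofReal ((2*(1:ℝ))^3) * volume T ^ iy
          ≤ eLpNorm (fun z => ∫ t in Icc (-1 : Fin 3 → ℝ) 1, f (z + gammaH t)) q volume := hlow
        _ ≤ C * eLpNorm f p volume := hbound
        _ = C * volume A ^ ix := by rw [findic A hAm hAvol0 hAvolfin]
    rw [hTvol, hAvol] at hchain
    rw [ENNReal.ofReal_rpow_of_pos (by positivity), ENNReal.ofReal_rpow_of_pos (by positivity)]
      at hchain
    rw [← ENNReal.ofReal_mul (by positivity), ← ENNReal.ofReal_coe_nnreal,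
      ← ENNReal.ofReal_mul (by positivity)] at hchain
    have hreal : (2*(1:ℝ))^3 * ((2*δ)^8)^iy ≤ (C:ℝ) * (64*(18*δ)^5)^ix :=
      (ENNReal.ofReal_le_ofReal_iff (by positivity)).1 hchain
    have hL : 8 * ((256:ℝ)) ^ iy * δ ^ (8*iy) = (2*(1:ℝ))^3 * ((2*δ)^8)^iy := by
      have e1 : ((2*δ:ℝ)^(8:ℕ))^iy = (2*δ) ^ ((8:ℝ)*iy) := by
        rw [← Real.rpow_natCast_mul (by linarith)]
        norm_num
      rw [e1, Real.mul_rpow (by norm_num) hδ0.le]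
      have e2 : (2:ℝ) ^ ((8:ℝ)*iy) = (256:ℝ) ^ iy := by
        rw [show ((8:ℝ)*iy) = ((8:ℕ):ℝ)*iy by norm_num,
          Real.rpow_natCast_mul (by norm_num : (0:ℝ) ≤ 2)]
        norm_num
      rw [e2]
      ring
    have hR : (C:ℝ) * (64*(18*δ)^5)^ix = ((C:ℝ) * ((64 * 18^5 : ℝ)) ^ ix) * δ ^ (5*ix) := by
      have e3 : (64:ℝ)*(18*δ)^5 = (64 * 18^5) * δ^5 := by ring
      rw [e3, Real.mul_rpow (by positivity) (by positivity)]
      have e4 : ((δ:ℝ)^(5:ℕ))^ix = δ ^ ((5:ℝ)*ix) := by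
        rw [← Real.rpow_natCast_mul hδ0.le]
        norm_num
      rw [e4]
      ring
    rw [← hL, hR] at hreal
    exact hreal
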